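/- arXiv:1708.03930 — 8 statements merged into one kernel-verified Lean document; each statement's English description precedes it below -/
import Mathlib

section
/- Let m and n be relatively prime positive integers. Then |S_{mn}| = |S_m| · |S_n|, where |A| denotes the cardinality of the finite set A. -/
/-- `S_n`: the set of elements of `ℤ/nℤ` expressible as a sum of two squares. -/
def sumTwoSquares (n : ℕ) : Set (ZMod n) := {m | ∃ x y : ZMod n, m = x ^ 2 + y ^ 2}

/-! The Chinese remainder theorem `ℤ/mnℤ ≃ ℤ/mℤ × ℤ/nℤ` is a ring isomorphism, and in a product
ring `(a, b)` is a sum of two squares exactly when `a` and `b` are. -/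

def sumTwoSq (R : Type*) [Semiring R] : Set R := {r | ∃ x y : R, r = x ^ 2 + y ^ 2}

theorem RingEquiv.image_sumTwoSq {R S : Type*} [Semiring R] [Semiring S] (e : R ≃+* S) :
    e '' sumTwoSq R = sumTwoSq S := by
  ext s
  constructor
  · rintro ⟨r, ⟨x, y, rfl⟩, rfl⟩
    exact ⟨e x, e y, by simp⟩
  · rintro ⟨x, y, rfl⟩
    exact ⟨e.symm x ^ 2 + e.symm y ^ 2, ⟨_, _, rfl⟩, by simp⟩

theorem sumTwoSq_prod (R S : Type*) [Semiring R] [Semiring S] :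
    sumTwoSq (R × S) = sumTwoSq R ×ˢ sumTwoSq S := by
  ext ⟨a, b⟩
  constructor
  · rintro ⟨x, y, h⟩
    simp only [Prod.ext_iff, Prod.fst_add, Prod.snd_add, Prod.pow_fst, Prod.pow_snd] at h
    exact ⟨⟨x.1, y.1, h.1⟩, ⟨x.2, y.2, h.2⟩⟩
  · rintro ⟨⟨x₁, y₁, rfl⟩, ⟨x₂, y₂, rfl⟩⟩
    exact ⟨(x₁, x₂), (y₁, y₂), by simp⟩

theorem card_sumTwoSquares_mul_general (m n : ℕ)
    (hco : Nat.Coprime m n) :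
    Nat.card (sumTwoSquares (m * n)) =
      Nat.card (sumTwoSquares m) * Nat.card (sumTwoSquares n) := by
  let e := ZMod.chineseRemainder hco
  calc Nat.card (sumTwoSquares (m * n))
      = Nat.card (e '' sumTwoSq (ZMod (m * n))) :=
        (Nat.card_image_of_injective e.injective _).symm
    _ = Nat.card (sumTwoSq (ZMod m) ×ˢ sumTwoSq (ZMod n)) := by
        rw [e.image_sumTwoSq, sumTwoSq_prod]
    _ = Nat.card (sumTwoSquares m) * Nat.card (sumTwoSquares n) := by
        rw [Nat.card_congr (Equiv.Set.prod _ _), Nat.card_prod]; rfl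

/-- For coprime positive integers `m, n`, `|S_{mn}| = |S_m| ⬝ |S_n|`. -/
theorem card_sumTwoSquares_mul (m n : ℕ) (hm : 0 < m) (hn : 0 < n)
    (hco : Nat.Coprime m n) :
    Nat.card (sumTwoSquares (m * n)) =
      Nat.card (sumTwoSquares m) * Nat.card (sumTwoSquares n) :=
  card_sumTwoSquares_mul_general m n hco
end

section
/- Let m and n be relatively prime positive integers. Then |N_{mn}| = n·|N_m| + m·|N_n| − |N_m|·|N_n|. -/
/-- `N_n`: the set of elements of `ℤ/nℤ` not expressible as a sum of two squares. -/
def notSumTwoSquares (n : ℕ) : Set (ZMod n) := (sumTwoSquares n)ᶜ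

/-!
The Chinese remainder isomorphism `ℤ/mn ≅ ℤ/m × ℤ/n` is a ring isomorphism, so it carries the sums
of two squares of `ℤ/mn` onto `S_m × S_n`, and hence `N_{mn}` onto the complement of `S_m × S_n`.
Counting that complement by inclusion–exclusion gives the formula.
-/

def sumTwoSquaresSet (R : Type*) [Semiring R] : Set R := {a | ∃ x y : R, a = x ^ 2 + y ^ 2}

theorem sumTwoSquares_eq (n : ℕ) : sumTwoSquares n = sumTwoSquaresSet (ZMod n) := rfl

section SumTwoSquaresSet

variable {R S : Type*} [Semiring R] [Semiring S]

theorem RingEquiv.image_sumTwoSquaresSet (e : R ≃+* S) :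
    e '' sumTwoSquaresSet R = sumTwoSquaresSet S := by
  ext a
  constructor
  · rintro ⟨_, ⟨x, y, rfl⟩, rfl⟩
    exact ⟨e x, e y, by simp⟩
  · rintro ⟨x, y, rfl⟩
    exact ⟨e.symm x ^ 2 + e.symm y ^ 2, ⟨_, _, rfl⟩, by simp⟩

theorem sumTwoSquaresSet_prod :
    sumTwoSquaresSet (R × S) = sumTwoSquaresSet R ×ˢ sumTwoSquaresSet S := by
  ext ⟨a, b⟩
  constructor
  · rintro ⟨x, y, h⟩
    simp only [Prod.ext_iff, Prod.fst_add, Prod.snd_add, Prod.pow_fst, Prod.pow_snd] at h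
    exact ⟨⟨x.1, y.1, h.1⟩, ⟨x.2, y.2, h.2⟩⟩
  · rintro ⟨⟨x₁, y₁, h₁⟩, ⟨x₂, y₂, h₂⟩⟩
    exact ⟨(x₁, x₂), (y₁, y₂), Prod.ext h₁ h₂⟩

end SumTwoSquaresSet

theorem Set.card_compl_prod {α β : Type*} [Finite α] [Finite β] (s : Set α) (t : Set β) :
    (Nat.card ↥(s ×ˢ t)ᶜ : ℤ) = Nat.card β * Nat.card ↥sᶜ + Nat.card α * Nat.card ↥tᶜ -
      Nat.card ↥sᶜ * Nat.card ↥tᶜ := by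
  have hs := s.ncard_add_ncard_compl
  have ht := t.ncard_add_ncard_compl
  have hst := (s ×ˢ t).ncard_add_ncard_compl
  rw [Set.ncard_prod, Nat.card_prod] at hst
  simp only [Nat.card_coe_set_eq]
  rw [← hs, ← ht] at hst ⊢
  zify at hst
  push_cast
  linear_combination hst

/-- For coprime positive integers `m, n`,
`|N_{mn}| = n⬝|N_m| + m⬝|N_n| − |N_m|⬝|N_n|`. -/
theorem card_notSumTwoSquares_mul (m n : ℕ) (hm : 0 < m) (hn : 0 < n)
    (hco : Nat.Coprime m n) :
    (Nat.card (notSumTwoSquares (m * n)) : ℤ) =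
      n * Nat.card (notSumTwoSquares m) + m * Nat.card (notSumTwoSquares n) -
        Nat.card (notSumTwoSquares m) * Nat.card (notSumTwoSquares n) := by
  have : NeZero m := ⟨hm.ne'⟩
  have : NeZero n := ⟨hn.ne'⟩
  let e := ZMod.chineseRemainder hco
  have himage : e '' notSumTwoSquares (m * n) = (sumTwoSquares m ×ˢ sumTwoSquares n)ᶜ := by
    simp only [notSumTwoSquares, sumTwoSquares_eq]
    rw [Set.image_compl_eq e.bijective, e.image_sumTwoSquaresSet, sumTwoSquaresSet_prod]
  rw [← Nat.card_image_of_injective e.injective, himage, Set.card_compl_prod,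
    Nat.card_zmod, Nat.card_zmod]
  rfl
end

section
/- Let m_1, m_2, ..., m_k be pairwise relatively prime positive integers and n = m_1 · m_2 · ... · m_k. Then r(N_n) = 1 − ∏_{i=1}^k (1 − r(N_{m_i})). -/
/-- The density `r(A) = |A| / n` of a subset `A ⊆ ℤ/nℤ`, as a rational number. -/
noncomputable def dens (n : ℕ) (A : Set (ZMod n)) : ℚ := (Nat.card A : ℚ) / n

/-! By the Chinese remainder theorem `ℤ/nℤ ≅ ∏ ℤ/m_iℤ` as rings, and a tuple is a sum of two
squares iff each coordinate is, so `S_n` corresponds to `∏ S_{m_i}` and `r(S_n) = ∏ r(S_{m_i})`.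
Passing to complements, `r(N) = 1 - r(S)`, gives the formula. -/

theorem exists_sq_add_sq_pi_iff {ι : Type*} {R : ι → Type*} [∀ i, Monoid (R i)]
    [∀ i, Add (R i)] (v : ∀ i, R i) :
    (∃ x y : ∀ i, R i, v = x ^ 2 + y ^ 2) ↔ ∀ i, ∃ x y : R i, v i = x ^ 2 + y ^ 2 := by
  refine ⟨fun ⟨x, y, h⟩ i => ⟨x i, y i, by rw [h]; rfl⟩, fun h => ?_⟩
  choose x y hxy using h
  exact ⟨x, y, funext hxy⟩

theorem RingEquiv.exists_sq_add_sq_iff {R S : Type*} [Semiring R] [Semiring S] (e : R ≃+* S)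
    (a : R) : (∃ x y : S, e a = x ^ 2 + y ^ 2) ↔ ∃ x y : R, a = x ^ 2 + y ^ 2 := by
  constructor
  · rintro ⟨x, y, h⟩
    exact ⟨e.symm x, e.symm y, e.injective (by simp [h])⟩
  · rintro ⟨x, y, rfl⟩
    exact ⟨e x, e y, by simp⟩

theorem card_sumTwoSquares_prod {ι : Type*} [Fintype ι] (m : ι → ℕ)
    (hco : Pairwise (Function.onFun Nat.Coprime m)) :
    Nat.card (sumTwoSquares (∏ i, m i)) = ∏ i, Nat.card (sumTwoSquares (m i)) := by
  let e := ZMod.prodEquivPi m hco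
  calc Nat.card (sumTwoSquares (∏ i, m i))
      = Nat.card {v : ∀ i, ZMod (m i) // ∀ i, v i ∈ sumTwoSquares (m i)} :=
        Nat.card_congr <| e.toEquiv.subtypeEquiv fun a => by
          simp only [sumTwoSquares, Set.mem_ofPred_eq, ← exists_sq_add_sq_pi_iff]
          exact (e.exists_sq_add_sq_iff a).symm
    _ = ∏ i, Nat.card (sumTwoSquares (m i)) := by
        rw [Nat.card_congr Equiv.subtypePiEquivPi, Nat.card_pi]

theorem dens_sumTwoSquares_prod {ι : Type*} [Fintype ι] (m : ι → ℕ)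
    (hco : Pairwise (Function.onFun Nat.Coprime m)) :
    dens (∏ i, m i) (sumTwoSquares (∏ i, m i)) = ∏ i, dens (m i) (sumTwoSquares (m i)) := by
  simp only [dens, card_sumTwoSquares_prod m hco, Nat.cast_prod, Finset.prod_div_distrib]

theorem dens_compl (n : ℕ) [NeZero n] (A : Set (ZMod n)) : dens n Aᶜ = 1 - dens n A := by
  have hcard : Nat.card ↥Aᶜ + Nat.card A = n := by
    rw [Nat.card_coe_set_eq, Nat.card_coe_set_eq, Set.ncard_compl_add_ncard, Nat.card_zmod]
  rw [dens, dens, eq_sub_iff_add_eq, ← add_div, ← Nat.cast_add, hcard,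
    div_self (NeZero.ne (n : ℚ))]

/-- If `m 1, …, m k` are pairwise coprime positive integers with product `n`, then
`r(N_n) = 1 − ∏ i, (1 − r(N_{m i}))`. -/
theorem dens_notSumTwoSquares_prod (k : ℕ) (m : Fin k → ℕ) (hm : ∀ i, 0 < m i)
    (hco : ∀ i j, i ≠ j → Nat.Coprime (m i) (m j)) (n : ℕ) (hn : n = ∏ i, m i) :
    dens n (notSumTwoSquares n) =
      1 - ∏ i, (1 - dens (m i) (notSumTwoSquares (m i))) := by
  subst hn
  have : NeZero (∏ i, m i) := ⟨(Finset.prod_pos fun i _ => hm i).ne'⟩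
  have (i : Fin k) : NeZero (m i) := ⟨(hm i).ne'⟩
  simp only [notSumTwoSquares, dens_compl, sub_sub_cancel]
  rw [dens_sumTwoSquares_prod m hco]
end

section
/- Let p be a prime with p ≡ 3 (mod 4) and let k ≥ 1 be an integer. Then |N_{p^k}| = (p^k − 1)/(p + 1) if k is even, and |N_{p^k}| = (p^k − p)/(p + 1) if k is odd. -/
/-!
A prime `p ≡ 3 (mod 4)` divides a sum of two squares only to an even power, while, `p` being
odd, Hensel's lemma lifts any representation of a `p`-adic unit as a sum of two squares mod `p`
to `ℤ_[p]`. As `p`-adic valuations below `k` are determined modulo `p ^ k`, a residue mod `p ^ k`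
is a sum of two squares exactly when its representative in `[0, p ^ k)` has even valuation.
Multiplication by `p` maps the residues mod `p ^ k` of even valuation onto `0` together with the
residues mod `p ^ (k + 1)` of odd valuation, so the number `N k` of residues mod `p ^ k` of odd
valuation satisfies `N (k + 1) + N k + 1 = p ^ k`.
-/

open Finset Polynomial

namespace PadicInt

variable {p : ℕ} [Fact p.Prime]

theorem norm_lt_one_iff_toZMod_eq_zero {z : ℤ_[p]} : ‖z‖ < 1 ↔ toZMod z = 0 := by
  rw [← RingHom.mem_ker, ker_toZMod, IsLocalRing.mem_maximalIdeal, mem_nonunits]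

theorem norm_eq_one_of_toZMod_ne_zero {z : ℤ_[p]} (h : toZMod z ≠ 0) : ‖z‖ = 1 :=
  (norm_le_one z).antisymm (not_lt.1 (mt norm_lt_one_iff_toZMod_eq_zero.1 h))

theorem isSquare_of_toZMod_eq_sq (hp2 : p ≠ 2) {z : ℤ_[p]} {a : ZMod p} (ha : a ≠ 0)
    (h : toZMod z = a ^ 2) : IsSquare z := by
  have h2 : (2 : ZMod p) ≠ 0 := Ring.two_ne_zero (by rwa [ZMod.ringChar_zmod_n])
  set b : ℤ_[p] := (a.val : ℤ_[p])
  have hb : toZMod b = a := by simp [b]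
  have hF : ‖aeval b (X ^ 2 - C z)‖ < 1 := by
    rw [norm_lt_one_iff_toZMod_eq_zero]
    simp [hb, h]
  have hF' : ‖aeval b (derivative (X ^ 2 - C z))‖ = 1 := by
    apply norm_eq_one_of_toZMod_ne_zero
    simpa [hb, ha, one_add_one_eq_two, map_ofNat] using h2
  obtain ⟨x, hx, -⟩ := hensels_lemma (hF.trans_eq (by rw [hF', one_pow]))
  rw [aeval_sub, aeval_X_pow, aeval_C, Algebra.algebraMap_self, RingHom.id_apply,
    sub_eq_zero] at hx
  exact ⟨x, by rw [← hx, sq]⟩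

end PadicInt

theorem exists_sq_add_sq_eq_natCast {p : ℕ} [Fact p.Prime] (hp2 : p ≠ 2) {u : ℕ}
    (hu : ¬ p ∣ u) (k : ℕ) : ∃ x y : ZMod (p ^ k), x ^ 2 + y ^ 2 = u := by
  have hu' : (u : ZMod p) ≠ 0 := by rwa [Ne, ZMod.natCast_eq_zero_iff]
  obtain ⟨a, b, ha, hab⟩ : ∃ a b : ZMod p, a ≠ 0 ∧ a ^ 2 + b ^ 2 = u := by
    obtain ⟨a, b, hab⟩ := ZMod.sq_add_sq p u
    by_cases ha : a = 0
    · refine ⟨b, a, fun hb => hu' ?_, by rw [add_comm, hab]⟩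
      simp [← hab, ha, hb]
    · exact ⟨a, b, ha, hab⟩
  obtain ⟨r, hr⟩ := PadicInt.isSquare_of_toZMod_eq_sq hp2 ha
    (z := u - (b.val : ℤ_[p]) ^ 2) (by simp [← hab])
  refine ⟨PadicInt.toZModPow k r, PadicInt.toZModPow k (b.val : ℤ_[p]), ?_⟩
  rw [← map_pow, ← map_pow, sq r, ← hr, ← map_add, sub_add_cancel, map_natCast]

section Valuation

variable {p : ℕ} [Fact p.Prime]

theorem even_padicValNat_sq_add_sq (hp4 : p % 4 = 3) (x y : ℕ) :
    Even (padicValNat p (x ^ 2 + y ^ 2)) := by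
  by_cases hmem : p ∈ (x ^ 2 + y ^ 2).primeFactors
  · exact Nat.eq_sq_add_sq_iff.1 ⟨x, y, rfl⟩ p hmem hp4
  · rw [← Nat.factorization_def _ Fact.out,
      Finsupp.notMem_support_iff.1 (by rwa [Nat.support_factorization])]
    exact Even.zero

theorem padicValNat_mod_pow {n k : ℕ} (h : n % p ^ k ≠ 0) :
    padicValNat p (n % p ^ k) = padicValNat p n := by
  have hn : n ≠ 0 := by rintro rfl; simp at h
  have hmod : padicValNat p (n % p ^ k) ≤ k := by
    refine ((Nat.pow_lt_pow_iff_right (Fact.out : p.Prime).one_lt).1 ?_).le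
    exact (Nat.le_of_dvd (Nat.pos_of_ne_zero h) pow_padicValNat_dvd).trans_lt
      (Nat.mod_lt _ (pow_pos (Fact.out : p.Prime).pos k))
  have hval : padicValNat p n ≤ k := by
    by_contra! hk
    exact h (Nat.mod_eq_zero_of_dvd ((pow_dvd_pow p hk.le).trans pow_padicValNat_dvd))
  apply le_antisymm
  · rw [← padicValNat_dvd_iff_le hn, ← Nat.dvd_mod_iff (pow_dvd_pow p hmod)]
    exact pow_padicValNat_dvd
  · rw [← padicValNat_dvd_iff_le h, Nat.dvd_mod_iff (pow_dvd_pow p hval)]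
    exact pow_padicValNat_dvd

end Valuation

theorem mem_sumTwoSquares_prime_pow_iff {p : ℕ} [Fact p.Prime] (hp4 : p % 4 = 3) (k : ℕ)
    (m : ZMod (p ^ k)) : m ∈ sumTwoSquares (p ^ k) ↔ Even (padicValNat p m.val) := by
  constructor
  · rintro ⟨x, y, rfl⟩
    have hcast : x ^ 2 + y ^ 2 = ((x.val ^ 2 + y.val ^ 2 : ℕ) : ZMod (p ^ k)) := by simp
    rw [hcast, ZMod.val_natCast]
    by_cases h0 : (x.val ^ 2 + y.val ^ 2) % p ^ k = 0
    · simp [h0]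
    · rw [padicValNat_mod_pow h0]
      exact even_padicValNat_sq_add_sq hp4 _ _
  · intro heven
    by_cases hm : m = 0
    · exact ⟨0, 0, by simp [hm]⟩
    have hp : p.Prime := Fact.out
    obtain ⟨e, u, hu, hval⟩ :=
      Nat.exists_eq_pow_mul_and_not_dvd ((ZMod.val_ne_zero m).2 hm) p hp.ne_one
    have hu0 : u ≠ 0 := by rintro rfl; simp at hu
    obtain ⟨i, rfl⟩ : Even e := by
      rwa [hval, padicValNat_base_pow_mul hp.one_lt hu0, padicValNat.eq_zero_of_not_dvd hu,
        zero_add] at heven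
    obtain ⟨x, y, hxy⟩ := exists_sq_add_sq_eq_natCast (by omega) hu k
    refine ⟨p ^ i * x, p ^ i * y, ?_⟩
    rw [← ZMod.natCast_zmod_val m, hval]
    push_cast
    rw [← hxy]
    ring

theorem notSumTwoSquares_prime_pow_eq {p : ℕ} [Fact p.Prime] (hp4 : p % 4 = 3) (k : ℕ) :
    notSumTwoSquares (p ^ k) = {m | Odd (padicValNat p m.val)} := by
  ext m
  simp [notSumTwoSquares, mem_sumTwoSquares_prime_pow_iff hp4]

theorem ZMod.natCard_setOf_val (n : ℕ) [NeZero n] (P : ℕ → Prop) [DecidablePred P] :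
    Nat.card {m : ZMod n | P m.val} = #{i ∈ range n | P i} := by
  classical
  rw [Nat.card_eq_card_toFinset, Set.toFinset_ofPred]
  refine card_nbij' ZMod.val (fun i => (i : ZMod n)) ?_ ?_ ?_ ?_
  · intro m hm
    simp_all [ZMod.val_lt m]
  · intro i hi
    simp_all [Nat.mod_eq_of_lt]
  · intro m _
    simp
  · intro i hi
    simp_all [Nat.mod_eq_of_lt]

section Count

variable {p : ℕ} [Fact p.Prime]

theorem insert_zero_filter_odd_padicValNat_range_pow_succ (k : ℕ) :
    insert 0 {n ∈ range (p ^ (k + 1)) | Odd (padicValNat p n)} =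
      image (p * ·) {m ∈ range (p ^ k) | Even (padicValNat p m)} := by
  have hp : p.Prime := Fact.out
  ext n
  simp only [mem_insert, mem_filter, mem_range, mem_image, pow_succ']
  constructor
  · rintro (rfl | ⟨hn, hodd⟩)
    · exact ⟨0, ⟨pow_pos hp.pos k, by simp⟩, mul_zero p⟩
    · have hn0 : n ≠ 0 := by rintro rfl; simp at hodd
      obtain ⟨m, rfl⟩ := dvd_of_one_le_padicValNat hodd.pos
      have hm0 : m ≠ 0 := right_ne_zero_of_mul hn0
      rw [padicValNat_base_mul hp.one_lt hm0, Nat.odd_add_one, Nat.not_odd_iff_even] at hodd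
      exact ⟨m, ⟨Nat.lt_of_mul_lt_mul_left hn, hodd⟩, rfl⟩
  · rintro ⟨m, ⟨hm, heven⟩, rfl⟩
    rcases eq_or_ne m 0 with rfl | hm0
    · exact Or.inl (mul_zero p)
    · refine Or.inr ⟨Nat.mul_lt_mul_of_pos_left hm hp.pos, ?_⟩
      rw [padicValNat_base_mul hp.one_lt hm0]
      exact heven.add_one

theorem card_filter_odd_padicValNat_range_pow_succ (k : ℕ) :
    #{n ∈ range (p ^ (k + 1)) | Odd (padicValNat p n)} +
      #{n ∈ range (p ^ k) | Odd (padicValNat p n)} + 1 = p ^ k := by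
  have hinsert := congrArg card (insert_zero_filter_odd_padicValNat_range_pow_succ (p := p) k)
  rw [card_insert_of_notMem (by simp), card_image_of_injective _
    (mul_right_injective₀ (Fact.out : p.Prime).ne_zero)] at hinsert
  have hsplit := card_filter_add_card_filter_not (s := range (p ^ k))
    (fun n => Even (padicValNat p n))
  simp only [Nat.not_even_iff_odd, card_range] at hsplit
  omega

theorem card_filter_odd_padicValNat_range_pow (k : ℕ) :
    (#{n ∈ range (p ^ k) | Odd (padicValNat p n)} : ℚ) * (p + 1) =
      p ^ k - if Even k then 1 else p := by
  induction k with
  | zero => simp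
  | succ k ih =>
    have hrec : ((#{n ∈ range (p ^ (k + 1)) | Odd (padicValNat p n)} : ℕ) : ℚ) +
        #{n ∈ range (p ^ k) | Odd (padicValNat p n)} + 1 = p ^ k := by
      exact_mod_cast card_filter_odd_padicValNat_range_pow_succ k
    by_cases hk : Even k
    · rw [if_pos hk] at ih
      rw [if_neg (by rwa [Nat.even_add_one, not_not])]
      linear_combination (p + 1 : ℚ) * hrec - ih
    · rw [if_neg hk] at ih
      rw [if_pos (Nat.even_add_one.2 hk)]
      linear_combination (p + 1 : ℚ) * hrec - ih

end Count

theorem card_notSumTwoSquares_prime_pow_general (p : ℕ) (hp : p.Prime) (hp4 : p % 4 = 3)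
    (k : ℕ) :
    (Even k → (Nat.card (notSumTwoSquares (p ^ k)) : ℚ) = ((p : ℚ) ^ k - 1) / (p + 1)) ∧
    (Odd k → (Nat.card (notSumTwoSquares (p ^ k)) : ℚ) = ((p : ℚ) ^ k - p) / (p + 1)) := by
  have := Fact.mk hp
  rw [notSumTwoSquares_prime_pow_eq hp4,
    ZMod.natCard_setOf_val (p ^ k) (fun n => Odd (padicValNat p n))]
  have hcount := card_filter_odd_padicValNat_range_pow (p := p) k
  refine ⟨fun hk => ?_, fun hk => ?_⟩ <;> rw [eq_div_iff (by positivity), hcount]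
  · simp [hk]
  · simp [Nat.not_even_iff_odd.2 hk]

/-- For a prime `p ≡ 3 (mod 4)` and `k ≥ 1`, `|N_{p^k}| = (p^k − 1)/(p + 1)` if `k` is
even and `|N_{p^k}| = (p^k − p)/(p + 1)` if `k` is odd. -/
theorem card_notSumTwoSquares_prime_pow (p : ℕ) (hp : p.Prime) (hp4 : p % 4 = 3)
    (k : ℕ) (hk : 1 ≤ k) :
    (Even k → (Nat.card (notSumTwoSquares (p ^ k)) : ℚ) = ((p : ℚ) ^ k - 1) / (p + 1)) ∧
    (Odd k → (Nat.card (notSumTwoSquares (p ^ k)) : ℚ) = ((p : ℚ) ^ k - p) / (p + 1)) :=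
  card_notSumTwoSquares_prime_pow_general p hp hp4 k
end

section
/- Let n be a positive integer. Then S_n = Z_n (every element of Z_n is a sum of two squares in Z_n) if and only if every prime p with p^2 dividing n satisfies p ≡ 1 (mod 4). -/
def AllSumsOfTwoSquares (R : Type*) [Semiring R] : Prop :=
  ∀ m : R, ∃ x y : R, m = x ^ 2 + y ^ 2

namespace AllSumsOfTwoSquares

variable {R S : Type*}

theorem of_surjective [Semiring R] [Semiring S] (h : AllSumsOfTwoSquares R) (f : R →+* S)
    (hf : Function.Surjective f) : AllSumsOfTwoSquares S := by
  intro m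
  obtain ⟨r, rfl⟩ := hf m
  obtain ⟨x, y, rfl⟩ := h r
  exact ⟨f x, f y, by simp⟩

theorem prod [Semiring R] [Semiring S] (hR : AllSumsOfTwoSquares R)
    (hS : AllSumsOfTwoSquares S) : AllSumsOfTwoSquares (R × S) := by
  rintro ⟨r, s⟩
  obtain ⟨x, y, rfl⟩ := hR r
  obtain ⟨u, v, rfl⟩ := hS s
  exact ⟨(x, u), (y, v), rfl⟩

theorem of_sq_eq_neg_one [CommRing R] {i : R} (hi : i ^ 2 = -1) (h2 : IsUnit (2 : R)) :
    AllSumsOfTwoSquares R := by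
  obtain ⟨h, hh⟩ := h2.exists_right_inv
  intro m
  refine ⟨(m + 1) * h, (m - 1) * h * i, ?_⟩
  linear_combination (-((m - 1) * h) ^ 2) * hi - m * (2 * h + 1) * hh

end AllSumsOfTwoSquares

namespace PadicInt

variable {p : ℕ} [Fact p.Prime]

theorem isUnit_of_toZMod_ne_zero {x : ℤ_[p]} (hx : toZMod x ≠ 0) : IsUnit x := by
  by_contra h
  rw [← mem_nonunits_iff, ← IsLocalRing.mem_maximalIdeal, ← ker_toZMod, RingHom.mem_ker] at h
  exact hx h

theorem isUnit_two (hp : p ≠ 2) : IsUnit (2 : ℤ_[p]) := by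
  refine isUnit_of_toZMod_ne_zero ?_
  rw [map_ofNat]
  exact Ring.two_ne_zero (by rwa [ZMod.ringChar_zmod_n])

open Polynomial in
theorem exists_sq_eq_neg_one (hp : p % 4 = 1) : ∃ z : ℤ_[p], z ^ 2 = -1 := by
  obtain ⟨i, hi⟩ := ZMod.exists_sq_eq_neg_one_iff (p := p) |>.mpr (by omega)
  set F : Polynomial ℤ_[p] := X ^ 2 + 1
  set a : ℤ_[p] := (i.val : ℤ_[p])
  have ha : toZMod a = i := by simp [a]
  have hroot : ‖F.aeval a‖ < 1 := by
    rw [← mem_nonunits, ← IsLocalRing.mem_maximalIdeal, ← ker_toZMod, RingHom.mem_ker]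
    simp [F, ha, sq, ← hi]
  have hderiv : ‖F.derivative.aeval a‖ = 1 := by
    have hi0 : i ≠ 0 := by rintro rfl; simp at hi
    have h2a : F.derivative.aeval a = 2 * a := by simp [F, one_add_one_eq_two]
    rw [h2a, ← isUnit_iff]
    exact (isUnit_two (by omega)).mul (isUnit_of_toZMod_ne_zero (ha ▸ hi0))
  obtain ⟨z, hz, -⟩ := hensels_lemma (F := F) (a := a) (by rwa [hderiv, one_pow])
  exact ⟨z, by simpa [F, add_eq_zero_iff_eq_neg] using hz⟩

end PadicInt

theorem allSumsOfTwoSquares_padicInt {p : ℕ} [Fact p.Prime] (hp : p % 4 = 1) :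
    AllSumsOfTwoSquares ℤ_[p] :=
  have ⟨_, hi⟩ := PadicInt.exists_sq_eq_neg_one hp
  .of_sq_eq_neg_one hi (PadicInt.isUnit_two (by omega))

theorem allSumsOfTwoSquares_zmod_prime_pow {p : ℕ} [Fact p.Prime] (hp : p % 4 = 1) (k : ℕ) :
    AllSumsOfTwoSquares (ZMod (p ^ k)) :=
  (allSumsOfTwoSquares_padicInt hp).of_surjective (PadicInt.toZModPow k)
    (ZMod.ringHom_surjective _)

theorem allSumsOfTwoSquares_zmod_prime (p : ℕ) [Fact p.Prime] : AllSumsOfTwoSquares (ZMod p) :=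
  fun m ↦ have ⟨x, y, h⟩ := ZMod.sq_add_sq p m; ⟨x, y, h.symm⟩

theorem allSumsOfTwoSquares_zmod_mul {a b : ℕ} (hab : a.Coprime b)
    (ha : AllSumsOfTwoSquares (ZMod a)) (hb : AllSumsOfTwoSquares (ZMod b)) :
    AllSumsOfTwoSquares (ZMod (a * b)) :=
  (ha.prod hb).of_surjective (ZMod.chineseRemainder hab).symm
    (ZMod.chineseRemainder hab).symm.surjective

theorem allSumsOfTwoSquares_zmod_of_dvd {m n : ℕ} (h : AllSumsOfTwoSquares (ZMod n))
    (hmn : m ∣ n) : AllSumsOfTwoSquares (ZMod m) :=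
  h.of_surjective (ZMod.castHom hmn _) (ZMod.castHom_surjective hmn)

theorem ZMod.sq_eq_zero_of_castHom_eq_zero {m : ℕ} {x : ZMod (m ^ 2)}
    (hx : (ZMod.castHom (dvd_pow_self m two_ne_zero) (ZMod m)) x = 0) : x ^ 2 = 0 := by
  obtain ⟨k, rfl⟩ := ZMod.intCast_surjective x
  rw [map_intCast, ZMod.intCast_zmod_eq_zero_iff_dvd] at hx
  obtain ⟨c, rfl⟩ := hx
  rw [Int.cast_mul, mul_pow, Int.cast_natCast, ← Nat.cast_pow, ZMod.natCast_self, zero_mul]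

theorem not_allSumsOfTwoSquares_zmod_four : ¬ AllSumsOfTwoSquares (ZMod 4) := by
  intro h
  obtain ⟨x, y, hxy⟩ := h 3
  revert x y
  decide

theorem not_allSumsOfTwoSquares_zmod_sq_of_mod_four_eq_three {p : ℕ} [Fact p.Prime]
    (hp : p % 4 = 3) : ¬ AllSumsOfTwoSquares (ZMod (p ^ 2)) := by
  intro h
  obtain ⟨x, y, hxy⟩ := h p
  set π := ZMod.castHom (dvd_pow_self p two_ne_zero) (ZMod p)
  have hπ : π x ^ 2 + π y ^ 2 = 0 := by
    have hxy' := congrArg π hxy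
    rwa [map_natCast, ZMod.natCast_self, map_add, map_pow, map_pow, eq_comm] at hxy'
  have hy : π y = 0 := by
    by_contra hy
    exact ZMod.mod_four_ne_three_of_sq_eq_neg_sq' hy (eq_neg_of_add_eq_zero_left hπ) hp
  have hx : π x = 0 := by
    simpa [hy] using hπ
  have hp0 : (p : ZMod (p ^ 2)) = 0 := by
    rw [hxy, ZMod.sq_eq_zero_of_castHom_eq_zero hx, ZMod.sq_eq_zero_of_castHom_eq_zero hy,
      add_zero]
  rw [ZMod.natCast_eq_zero_iff] at hp0
  have := (Nat.pow_dvd_pow_iff_le_right (Fact.out : p.Prime).one_lt).mp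
    (hp0.trans (pow_one p).symm.dvd)
  omega

theorem not_allSumsOfTwoSquares_zmod_prime_sq {p : ℕ} (hp : p.Prime) (h : p % 4 ≠ 1) :
    ¬ AllSumsOfTwoSquares (ZMod (p ^ 2)) := by
  have := Fact.mk hp
  rcases hp.eq_two_or_odd' with rfl | hodd
  · exact not_allSumsOfTwoSquares_zmod_four
  · exact not_allSumsOfTwoSquares_zmod_sq_of_mod_four_eq_three (by grind)

theorem allSumsOfTwoSquares_zmod_of_prime_sq_dvd {n : ℕ}
    (h : ∀ p : ℕ, p.Prime → p ^ 2 ∣ n → p % 4 = 1) : AllSumsOfTwoSquares (ZMod n) := by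
  induction n using Nat.recOnPosPrimePosCoprime with
  | prime_pow p k hp hk =>
    have := Fact.mk hp
    obtain rfl | hk2 := eq_or_ne k 1
    · rw [pow_one]; exact allSumsOfTwoSquares_zmod_prime p
    · exact allSumsOfTwoSquares_zmod_prime_pow (h p hp (pow_dvd_pow p (by omega))) k
  | zero => exact absurd (h 2 Nat.prime_two (dvd_zero _)) (by norm_num)
  | one => exact fun _ ↦ ⟨0, 0, Subsingleton.elim _ _⟩
  | coprime a b _ _ hab iha ihb =>
    exact allSumsOfTwoSquares_zmod_mul hab (iha fun p hp hpa ↦ h p hp (hpa.mul_right b))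
      (ihb fun p hp hpb ↦ h p hp (hpb.mul_left a))

theorem sumTwoSquares_eq_univ_iff_allSumsOfTwoSquares (n : ℕ) :
    sumTwoSquares n = Set.univ ↔ AllSumsOfTwoSquares (ZMod n) :=
  Set.eq_univ_iff_forall

theorem sumTwoSquares_eq_univ_iff_general (n : ℕ) :
    sumTwoSquares n = Set.univ ↔ ∀ p : ℕ, p.Prime → p ^ 2 ∣ n → p % 4 = 1 := by
  rw [sumTwoSquares_eq_univ_iff_allSumsOfTwoSquares]
  refine ⟨fun h p hp hpn ↦ ?_, allSumsOfTwoSquares_zmod_of_prime_sq_dvd⟩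
  by_contra hp4
  exact not_allSumsOfTwoSquares_zmod_prime_sq hp hp4 (allSumsOfTwoSquares_zmod_of_dvd h hpn)

/-- For a positive integer `n`, every element of `ℤ/nℤ` is a sum of two squares iff
every prime `p` with `p² ∣ n` satisfies `p ≡ 1 (mod 4)`. -/
theorem sumTwoSquares_eq_univ_iff (n : ℕ) (hn : 0 < n) :
    sumTwoSquares n = Set.univ ↔ ∀ p : ℕ, p.Prime → p ^ 2 ∣ n → p % 4 = 1 :=
  sumTwoSquares_eq_univ_iff_general n
end

section
/- With r(S_n) and r(N_n) the densities of S_n and N_n in Z_n, one has liminf_{n→∞} r(S_n) = 0, limsup_{n→∞} r(S_n) = 1, liminf_{n→∞} r(N_n) = 0, and limsup_{n→∞} r(N_n) = 1; in particular neither sequence converges. -/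
open Filter

/-- The density `r(S_n) = |S_n|/n` as a real number. -/
noncomputable def rS (n : ℕ) : ℝ := (Nat.card (sumTwoSquares n) : ℝ) / n

/-- The density `r(N_n) = |N_n|/n` as a real number. -/
noncomputable def rN (n : ℕ) : ℝ := (Nat.card (notSumTwoSquares n) : ℝ) / n

/-!
Every element of a finite field is a sum of two squares, so `r(S_p) = 1` and `r(N_p) = 0` for all
primes `p`. If `p ≡ 3 (mod 4)`, then `p ∣ x² + y²` forces `p ∣ x` and `p ∣ y`, so the `p - 1`
nonzero multiples of `p` are not sums of two squares modulo `p²` and `r(S_{p²}) ≤ 1 - (p - 1)/p²`.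
By the Chinese remainder theorem `r(S_n)` is multiplicative in coprime moduli, and
`∑_{p ≡ 3 (4)} 1/p = ∞`, so along products of such `p²` the density `r(S_n)` tends to `0`.
-/

open Topology Set

open ArithmeticFunction vonMangoldt LSeries in
theorem LSeries_residueClass_prime_lower_bound {q : ℕ} [NeZero q] {a : ZMod q}
    (ha : IsUnit a) :
    ∃ C : ℝ, ∀ {x : ℝ}, x ∈ Ioc 1 2 → (q.totient : ℝ)⁻¹ / (x - 1) - C ≤
      ∑' n : ℕ, (if n.Prime then residueClass a n else 0) / (n : ℝ) ^ x := by
  obtain ⟨C, hC⟩ := LSeries_residueClass_lower_bound ha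
  set Q : ℕ → ℝ := fun n ↦ if n.Prime then 0 else residueClass a n
  have hQsum : Summable fun n : ℕ ↦ Q n / n := summable_residueClass_non_primes_div a
  refine ⟨C + ∑' n : ℕ, Q n / n, fun {x} hx ↦ ?_⟩
  have hL : Summable fun n : ℕ ↦ residueClass a n / (n : ℝ) ^ x :=
    summable_real_of_abscissaOfAbsConv_lt <|
      (abscissaOfAbsConv_residueClass_le_one a).trans_lt <| mod_cast hx.1
  have hQ (n : ℕ) : 0 ≤ Q n := by positivity [residueClass_nonneg a n]
  have hQ_le (n : ℕ) : Q n / (n : ℝ) ^ x ≤ Q n / n := by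
    rcases n.eq_zero_or_pos with rfl | hn
    · simp [Q]
    · refine div_le_div_of_nonneg_left (hQ n) (mod_cast hn) ?_
      simpa using Real.rpow_le_rpow_of_exponent_le (x := n) (mod_cast hn) hx.1.le
  have hQxsum := Summable.of_nonneg_of_le (fun n ↦ by positivity [hQ n]) hQ_le hQsum
  have hsplit (n : ℕ) : residueClass a n / (n : ℝ) ^ x =
      (if n.Prime then residueClass a n else 0) / (n : ℝ) ^ x + Q n / (n : ℝ) ^ x := by
    simp only [Q, ← add_div, ite_add_ite, zero_add, add_zero, ite_self]
  have hPsum : Summable fun n : ℕ ↦ (if n.Prime then residueClass a n else 0) / (n : ℝ) ^ x :=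
    (hL.sub hQxsum).congr fun n ↦ by rw [hsplit n, add_sub_cancel_right]
  have := hC hx
  rw [tsum_congr hsplit, hPsum.tsum_add hQxsum] at this
  linarith [hQxsum.tsum_le_tsum hQ_le hQsum]

open ArithmeticFunction vonMangoldt in
theorem mul_residueClass_prime_div_rpow_le {q : ℕ} (a : ZMod q) {x : ℝ} (hx : 1 < x) (n : ℕ) :
    (x - 1) * ((if n.Prime then residueClass a n else 0) / (n : ℝ) ^ x) ≤
      indicator {p : ℕ | p.Prime ∧ (p : ZMod q) = a} (fun n : ℕ ↦ (1 : ℝ) / n) n := by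
  by_cases hn : n.Prime ∧ (n : ZMod q) = a
  · have hn0 : (0 : ℝ) < n := mod_cast hn.1.pos
    have hlog : Real.log n ≤ (n : ℝ) ^ (x - 1) / (x - 1) :=
      Real.log_le_rpow_div hn0.le (sub_pos.mpr hx)
    rw [indicator_of_mem (show n ∈ {p : ℕ | p.Prime ∧ (p : ZMod q) = a} from hn), if_pos hn.1,
      residueClass, indicator_of_mem (show n ∈ {n : ℕ | (n : ZMod q) = a} from hn.2),
      vonMangoldt_apply_prime hn.1]
    calc (x - 1) * (Real.log n / (n : ℝ) ^ x)
        ≤ (x - 1) * ((n : ℝ) ^ (x - 1) / (x - 1) / (n : ℝ) ^ x) := by gcongr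
      _ = 1 / n := by
        rw [Real.rpow_sub_one hn0.ne']
        field_simp [(sub_pos.mpr hx).ne']
  · rw [indicator_of_notMem (show n ∉ {p : ℕ | p.Prime ∧ (p : ZMod q) = a} from hn)]
    split_ifs with hp
    · rw [residueClass, indicator_of_notMem (show n ∉ {n : ℕ | (n : ZMod q) = a} from
        fun h ↦ hn ⟨hp, h⟩)]
      simp
    · simp

open ArithmeticFunction vonMangoldt in
/-- If the sum were finite, dominated convergence would give `(x - 1) ∑_{p ≡ a} log p / p ^ x → 0`
as `x → 1⁺`, whereas the pole of the L-series of `residueClass a` makes it tend to `1 / φ(q)`. -/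
theorem not_summable_one_div_on_primes_eq_mod {q : ℕ} [NeZero q] {a : ZMod q}
    (ha : IsUnit a) :
    ¬ Summable (indicator {p : ℕ | p.Prime ∧ (p : ZMod q) = a} fun n : ℕ ↦ (1 : ℝ) / n) := by
  intro hsum
  set P : ℝ → ℕ → ℝ := fun x n ↦ (if n.Prime then residueClass a n else 0) / (n : ℝ) ^ x
  set c : ℝ := (q.totient : ℝ)⁻¹
  obtain ⟨C, hC⟩ := LSeries_residueClass_prime_lower_bound ha
  have hpoint (n : ℕ) : Tendsto (fun x ↦ (x - 1) * P x n) (𝓝[>] 1) (𝓝 0) := by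
    rcases eq_or_ne n 0 with rfl | hn
    · simp [P, Nat.not_prime_zero]
    · have : (0 : ℝ) < n := by positivity
      have hcont : Continuous fun x ↦ (x - 1) * P x n := by
        fun_prop (disch := intros; positivity)
      simpa using (hcont.tendsto 1).mono_left nhdsWithin_le_nhds
  have hlim : Tendsto (fun x ↦ ∑' n, (x - 1) * P x n) (𝓝[>] 1) (𝓝 0) := by
    have hzero : ∑' _ : ℕ, (0 : ℝ) = 0 := tsum_zero
    refine hzero ▸ tendsto_tsum_of_dominated_convergence hsum hpoint ?_
    filter_upwards [self_mem_nhdsWithin] with x (hx : 1 < x) n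
    rw [Real.norm_of_nonneg (by positivity [residueClass_nonneg a n, sub_pos.mpr hx])]
    exact mul_residueClass_prime_div_rpow_le a hx n
  have hlim' : Tendsto (fun x : ℝ ↦ c - C * (x - 1)) (𝓝[>] 1) (𝓝 c) := by
    have : Continuous fun x : ℝ ↦ c - C * (x - 1) := by fun_prop
    simpa using (this.tendsto 1).mono_left nhdsWithin_le_nhds
  have hle : ∀ᶠ x in 𝓝[>] 1, c - C * (x - 1) ≤ ∑' n, (x - 1) * P x n := by
    filter_upwards [Ioc_mem_nhdsGT one_lt_two] with x hx
    have hx1 : 0 < x - 1 := sub_pos.mpr hx.1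
    have := mul_le_mul_of_nonneg_left (hC hx) hx1.le
    rw [mul_sub, mul_div_cancel₀ _ hx1.ne'] at this
    rw [tsum_mul_left]
    linarith
  have hc : 0 < c := inv_pos.mpr (mod_cast q.totient.pos_of_neZero)
  exact (le_of_tendsto_of_tendsto hlim' hlim hle).not_gt hc

theorem ZMod.eq_zero_of_sq_add_sq_eq_zero {p : ℕ} [Fact p.Prime] (hp : p % 4 = 3) {x y : ZMod p}
    (h : x ^ 2 + y ^ 2 = 0) : x = 0 := by
  by_contra hx
  refine ZMod.exists_sq_eq_neg_one_iff.mp ⟨y / x, ?_⟩ hp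
  field_simp
  linear_combination -h

theorem Int.sq_dvd_sq_add_sq_of_dvd {p : ℕ} (hp : p.Prime) (hp4 : p % 4 = 3) {x y : ℤ}
    (h : (p : ℤ) ∣ x ^ 2 + y ^ 2) : (p : ℤ) ^ 2 ∣ x ^ 2 + y ^ 2 := by
  have := Fact.mk hp
  have hdvd {x y : ℤ} (h : (p : ℤ) ∣ x ^ 2 + y ^ 2) : (p : ℤ) ∣ x := by
    rw [← ZMod.intCast_zmod_eq_zero_iff_dvd] at h ⊢
    push_cast at h
    exact ZMod.eq_zero_of_sq_add_sq_eq_zero hp4 h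
  exact dvd_add (pow_dvd_pow_of_dvd (hdvd h) 2)
    (pow_dvd_pow_of_dvd (hdvd (add_comm (x ^ 2) _ ▸ h)) 2)

theorem natCast_mul_notMem_sumTwoSquares_sq {p k : ℕ} (hp : p.Prime) (hp4 : p % 4 = 3)
    (hk0 : 0 < k) (hkp : k < p) : ((p * k : ℕ) : ZMod (p ^ 2)) ∉ sumTwoSquares (p ^ 2) := by
  rintro ⟨x, y, hxy⟩
  rw [← ZMod.intCast_zmod_cast x, ← ZMod.intCast_zmod_cast y] at hxy
  set X : ℤ := x.cast
  set Y : ℤ := y.cast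
  have hmod : (p : ℤ) ^ 2 ∣ X ^ 2 + Y ^ 2 - p * k := by
    have := (ZMod.intCast_eq_intCast_iff_dvd_sub (p * k) (X ^ 2 + Y ^ 2) (p ^ 2)).mp
      (by push_cast at hxy ⊢; exact hxy)
    exact_mod_cast this
  have hsq : (p : ℤ) ^ 2 ∣ X ^ 2 + Y ^ 2 := by
    refine Int.sq_dvd_sq_add_sq_of_dvd hp hp4 ?_
    have := ((dvd_pow_self (p : ℤ) two_ne_zero).trans hmod).add (dvd_mul_right (p : ℤ) k)
    rwa [sub_add_cancel] at this
  have hpk : (p : ℤ) * p ∣ p * k := by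
    have := hsq.sub hmod
    rwa [sub_sub_cancel, sq] at this
  have hdvd : p ∣ k := Int.natCast_dvd_natCast.mp <|
    (mul_dvd_mul_iff_left (by exact_mod_cast hp.ne_zero)).mp hpk
  exact (Nat.le_of_dvd hk0 hdvd).not_gt hkp

theorem card_sumTwoSquares_sq_add_le {p : ℕ} (hp : p.Prime) (hp4 : p % 4 = 3) :
    Nat.card (sumTwoSquares (p ^ 2)) + (p - 1) ≤ p ^ 2 := by
  classical
  have : NeZero (p ^ 2) := ⟨pow_ne_zero 2 hp.ne_zero⟩
  set M := (Finset.Ioo 0 p).image fun k : ℕ ↦ ((p * k : ℕ) : ZMod (p ^ 2))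
  have hlt {k : ℕ} (hk : k ∈ Finset.Ioo 0 p) : p * k < p ^ 2 := by
    rw [sq]
    exact Nat.mul_lt_mul_of_pos_left (Finset.mem_Ioo.mp hk).2 hp.pos
  have hM : M.card = p - 1 := by
    rw [Finset.card_image_of_injOn, Nat.card_Ioo, Nat.sub_zero]
    intro i hi j hj hij
    have := congrArg ZMod.val hij
    rwa [ZMod.val_natCast_of_lt (hlt hi), ZMod.val_natCast_of_lt (hlt hj),
      Nat.mul_right_inj hp.ne_zero] at this
  have hdisj : Disjoint (sumTwoSquares (p ^ 2)).toFinset M := by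
    refine Finset.disjoint_right.mpr fun m hm ↦ ?_
    obtain ⟨k, hk, rfl⟩ := Finset.mem_image.mp hm
    obtain ⟨hk0, hkp⟩ := Finset.mem_Ioo.mp hk
    simpa using natCast_mul_notMem_sumTwoSquares_sq hp hp4 hk0 hkp
  rw [Nat.card_eq_card_toFinset, ← hM, ← Finset.card_union_of_disjoint hdisj]
  exact (Finset.card_le_univ _).trans (ZMod.card _).le

theorem rS_nonneg (n : ℕ) : 0 ≤ rS n := by
  unfold rS
  positivity

theorem rS_le_one (n : ℕ) : rS n ≤ 1 := by
  rcases eq_or_ne n 0 with rfl | hn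
  · simp [rS]
  · have : NeZero n := ⟨hn⟩
    have hcard : Nat.card (sumTwoSquares n) ≤ n :=
      (Finite.card_subtype_le _).trans (Nat.card_zmod n).le
    rw [rS, div_le_one (by positivity)]
    exact_mod_cast hcard

theorem rN_eq_one_sub_rS {n : ℕ} (hn : n ≠ 0) : rN n = 1 - rS n := by
  have : NeZero n := ⟨hn⟩
  have hcard : Nat.card (sumTwoSquares n) + Nat.card (notSumTwoSquares n) = n := by
    rw [Nat.card_coe_set_eq, Nat.card_coe_set_eq, notSumTwoSquares,
      Set.ncard_add_ncard_compl, Nat.card_zmod]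
  rw [rN, rS, eq_sub_iff_add_eq, ← add_div, div_eq_one_iff_eq (by positivity)]
  exact_mod_cast (add_comm _ _).trans hcard

theorem rN_nonneg (n : ℕ) : 0 ≤ rN n := by
  unfold rN
  positivity

theorem rN_le_one (n : ℕ) : rN n ≤ 1 := by
  rcases eq_or_ne n 0 with rfl | hn
  · simp [rN]
  · linarith [rN_eq_one_sub_rS hn, rS_nonneg n]

theorem rS_eq_one_of_sumTwoSquares_eq_univ {n : ℕ} (hn : n ≠ 0)
    (h : sumTwoSquares n = univ) : rS n = 1 := by
  have : NeZero n := ⟨hn⟩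
  rw [rS, h, Nat.card_univ, Nat.card_zmod, div_self (by positivity)]

theorem rS_prime {p : ℕ} (hp : p.Prime) : rS p = 1 := by
  have := Fact.mk hp
  refine rS_eq_one_of_sumTwoSquares_eq_univ hp.ne_zero (eq_univ_of_forall fun m ↦ ?_)
  obtain ⟨x, y, h⟩ := ZMod.sq_add_sq p m
  exact ⟨x, y, h.symm⟩

theorem rS_mul {m n : ℕ} (h : m.Coprime n) : rS (m * n) = rS m * rS n := by
  let e := ZMod.chineseRemainder h
  have hmem (z : ZMod (m * n)) :
      z ∈ sumTwoSquares (m * n) ↔ e z ∈ sumTwoSquares m ×ˢ sumTwoSquares n := by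
    constructor
    · rintro ⟨x, y, rfl⟩
      refine ⟨⟨(e x).1, (e y).1, ?_⟩, ⟨(e x).2, (e y).2, ?_⟩⟩ <;> simp
    · rintro ⟨⟨a, b, hab⟩, ⟨c, d, hcd⟩⟩
      refine ⟨e.symm (a, c), e.symm (b, d), e.injective ?_⟩
      rw [map_add, map_pow, map_pow, RingEquiv.apply_symm_apply, RingEquiv.apply_symm_apply]
      exact Prod.ext hab hcd
  have hcard : Nat.card (sumTwoSquares (m * n)) =
      Nat.card (sumTwoSquares m) * Nat.card (sumTwoSquares n) := by
    rw [Nat.card_congr ((e.toEquiv.subtypeEquiv hmem).trans (Equiv.Set.prod _ _)),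
      Nat.card_prod]
  rw [rS, rS, rS, hcard]
  push_cast
  exact mul_div_mul_comm _ _ _ _

open Function in
theorem rS_prod {ι : Type*} (s : Finset ι) (f : ι → ℕ)
    (hs : (s : Set ι).Pairwise (Nat.Coprime on f)) : rS (∏ i ∈ s, f i) = ∏ i ∈ s, rS (f i) := by
  classical
  induction s using Finset.induction_on with
  | empty =>
    rw [Finset.prod_empty, Finset.prod_empty]
    refine rS_eq_one_of_sumTwoSquares_eq_univ one_ne_zero (eq_univ_of_forall fun m ↦ ?_)
    exact ⟨0, 0, Subsingleton.elim _ _⟩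
  | insert i s hi ih =>
    rw [Finset.coe_insert] at hs
    rw [Finset.prod_insert hi, Finset.prod_insert hi,
      rS_mul (Nat.Coprime.prod_right fun j hj ↦ hs (mem_insert i _)
        (mem_insert_of_mem _ (Finset.mem_coe.mpr hj)) (ne_of_mem_of_not_mem hj hi).symm),
      ih (hs.mono (subset_insert i _))]

theorem rS_sq_le_exp {p : ℕ} (hp : p.Prime) (hp4 : p % 4 = 3) :
    rS (p ^ 2) ≤ Real.exp (-(1 / p) / 2) := by
  have hp2 : (2 : ℝ) ≤ p := mod_cast hp.two_le
  have hcard : (Nat.card (sumTwoSquares (p ^ 2)) : ℝ) + (p - 1) ≤ p ^ 2 := by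
    have := card_sumTwoSquares_sq_add_le hp hp4
    rw [← Nat.cast_le (α := ℝ), Nat.cast_add, Nat.cast_sub hp.one_le] at this
    simpa using this
  calc rS (p ^ 2) ≤ 1 - (p - 1) / p ^ 2 := by
        rw [rS, Nat.cast_pow, div_le_iff₀ (by positivity)]
        field_simp
        linarith
    _ ≤ Real.exp (-((p - 1) / p ^ 2)) := by linarith [Real.add_one_le_exp (-((p - 1) / p ^ 2))]
    _ ≤ Real.exp (-(1 / p) / 2) := by
        rw [neg_div, Real.exp_le_exp, neg_le_neg_iff, div_div,
          div_le_div_iff₀ (by positivity) (by positivity)]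
        nlinarith

theorem exists_rS_lt {ε : ℝ} (hε : 0 < ε) : ∃ n ≠ 0, rS n < ε := by
  classical
  set T := {p : ℕ | p.Prime ∧ (p : ZMod 4) = 3}
  obtain ⟨s, hs⟩ : ∃ s : Finset ℕ,
      -2 * Real.log ε < ∑ n ∈ s, T.indicator (fun n : ℕ ↦ (1 : ℝ) / n) n := by
    by_contra! h
    exact not_summable_one_div_on_primes_eq_mod (q := 4) (a := 3) (by decide) <|
      summable_of_sum_le (fun n ↦ indicator_nonneg (fun _ _ ↦ by positivity) n) h
  rw [Finset.sum_indicator_eq_sum_filter] at hs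
  set Q := s.filter (· ∈ T)
  have hQ {p : ℕ} (hp : p ∈ Q) : p.Prime ∧ p % 4 = 3 := by
    obtain ⟨hpr, h3⟩ := (Finset.mem_filter.mp hp).2
    exact ⟨hpr, by rw [← ZMod.val_natCast, h3]; rfl⟩
  have hcop : (Q : Set ℕ).Pairwise (Function.onFun Nat.Coprime (· ^ 2)) :=
    fun p hp q hq hpq ↦ Nat.coprime_pow_primes 2 2 (hQ hp).1 (hQ hq).1 hpq
  refine ⟨∏ p ∈ Q, p ^ 2, Finset.prod_ne_zero_iff.mpr fun p hp ↦ pow_ne_zero 2 (hQ hp).1.ne_zero,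
    ?_⟩
  calc rS (∏ p ∈ Q, p ^ 2) = ∏ p ∈ Q, rS (p ^ 2) := rS_prod Q _ hcop
    _ ≤ ∏ p ∈ Q, Real.exp (-(1 / p) / 2) :=
        Finset.prod_le_prod (fun _ _ ↦ rS_nonneg _) fun p hp ↦ rS_sq_le_exp (hQ hp).1 (hQ hp).2
    _ = Real.exp (-(∑ p ∈ Q, (1 : ℝ) / p) / 2) := by
        rw [← Real.exp_sum, ← Finset.sum_neg_distrib, Finset.sum_div]
    _ < Real.exp (Real.log ε) := Real.exp_lt_exp.mpr (by linarith)
    _ = ε := Real.exp_log hε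

theorem frequently_rS_lt {ε : ℝ} (hε : 0 < ε) : ∃ᶠ n in atTop, n ≠ 0 ∧ rS n < ε := by
  obtain ⟨n, hn, hlt⟩ := exists_rS_lt hε
  refine frequently_atTop.mpr fun m ↦ ?_
  obtain ⟨p, hpm, hp⟩ := Nat.exists_infinite_primes (m + n + 1)
  have hcop : n.Coprime p := Nat.Coprime.symm <| (Nat.Prime.coprime_iff_not_dvd hp).mpr
    fun h ↦ (Nat.le_of_dvd (Nat.pos_of_ne_zero hn) h).not_gt (by omega)
  refine ⟨n * p, ?_, mul_ne_zero hn hp.ne_zero, ?_⟩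
  · nlinarith [Nat.pos_of_ne_zero hn]
  · rwa [rS_mul hcop, rS_prime hp, mul_one]

theorem liminf_eq_of_frequently_lt {ι : Type*} {l : Filter ι} {u : ι → ℝ} {a : ℝ}
    (ha : ∀ i, a ≤ u i) (hu : IsBoundedUnder (· ≤ ·) l u)
    (h : ∀ ε > 0, ∃ᶠ i in l, u i < a + ε) : liminf u l = a := by
  have : l.NeBot := (frequently_true_iff_neBot l).mp ((h 1 one_pos).mono fun _ _ ↦ trivial)
  refine le_antisymm (le_of_forall_pos_le_add fun ε hε ↦ ?_)
    (le_liminf_of_le hu.isCoboundedUnder_ge (.of_forall ha))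
  exact liminf_le_of_frequently_le ((h ε hε).mono fun _ ↦ le_of_lt) (isBoundedUnder_of ⟨a, ha⟩)

theorem limsup_eq_of_frequently_gt {ι : Type*} {l : Filter ι} {u : ι → ℝ} {b : ℝ}
    (hb : ∀ i, u i ≤ b) (hu : IsBoundedUnder (· ≥ ·) l u)
    (h : ∀ ε > 0, ∃ᶠ i in l, b - ε < u i) : limsup u l = b := by
  have : l.NeBot := (frequently_true_iff_neBot l).mp ((h 1 one_pos).mono fun _ _ ↦ trivial)
  refine le_antisymm (limsup_le_of_le hu.isCoboundedUnder_le (.of_forall hb))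
    (le_of_forall_pos_le_add fun ε hε ↦ ?_)
  have := le_limsup_of_frequently_le ((h ε hε).mono fun _ ↦ le_of_lt) (isBoundedUnder_of ⟨b, hb⟩)
  linarith

/-- `liminf r(S_n) = 0`, `limsup r(S_n) = 1`, `liminf r(N_n) = 0`, `limsup r(N_n) = 1`;
in particular neither sequence converges. -/
theorem liminf_limsup_dens_sumTwoSquares :
    liminf rS atTop = 0 ∧ limsup rS atTop = 1 ∧
    liminf rN atTop = 0 ∧ limsup rN atTop = 1 ∧
    (¬ ∃ L : ℝ, Tendsto rS atTop (nhds L)) ∧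
    (¬ ∃ L : ℝ, Tendsto rN atTop (nhds L)) := by
  have hprime : ∃ᶠ p : ℕ in atTop, p.Prime := Nat.frequently_atTop_iff_infinite.mpr
    Nat.infinite_setOfPred_prime
  have hS₀ : liminf rS atTop = 0 :=
    liminf_eq_of_frequently_lt rS_nonneg (isBoundedUnder_of ⟨1, rS_le_one⟩) fun ε hε ↦
      (frequently_rS_lt hε).mono fun _ h ↦ by linarith [h.2]
  have hS₁ : limsup rS atTop = 1 :=
    limsup_eq_of_frequently_gt rS_le_one (isBoundedUnder_of ⟨0, rS_nonneg⟩) fun ε hε ↦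
      hprime.mono fun p hp ↦ by linarith [rS_prime hp]
  have hN₀ : liminf rN atTop = 0 :=
    liminf_eq_of_frequently_lt rN_nonneg (isBoundedUnder_of ⟨1, rN_le_one⟩) fun ε hε ↦
      hprime.mono fun p hp ↦ by linarith [rN_eq_one_sub_rS hp.ne_zero, rS_prime hp]
  have hN₁ : limsup rN atTop = 1 :=
    limsup_eq_of_frequently_gt rN_le_one (isBoundedUnder_of ⟨0, rN_nonneg⟩) fun ε hε ↦
      (frequently_rS_lt hε).mono fun _ h ↦ by linarith [rN_eq_one_sub_rS h.1, h.2]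
  refine ⟨hS₀, hS₁, hN₀, hN₁, ?_, ?_⟩ <;> rintro ⟨L, hL⟩
  · exact zero_ne_one (hS₀ ▸ hS₁ ▸ hL.liminf_eq.trans hL.limsup_eq.symm)
  · exact zero_ne_one (hN₀ ▸ hN₁ ▸ hL.liminf_eq.trans hL.limsup_eq.symm)
end

section
/- Let k ≥ 2, let m be an odd positive integer, and set n = 2^k · m. Suppose x is a nonnegative integer such that x mod 2^k ∈ N_{2^k} and (x − 2^i) mod n ∈ N_n for each i = 0, 1, ..., k−1. Then no nonnegative integer M with M ≡ x (mod n) can be written as M = a^2 + b^2 or as M = a^2 + b^2 + 2^j with a, b nonnegative integers and j ≥ 0. -/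
/-! A representation `M = a² + b² (+ 2^j)` reduces modulo `2^k` or `n` to a representation of `x`
as a sum of two squares: `2^j` vanishes modulo `2^k` when `j ≥ k`, and for `j < k` it moves to the
other side, exhibiting `x - 2^j ∈ S_n`. -/

theorem natCast_sq_add_sq_mem_sumTwoSquares (n a b : ℕ) :
    ((a ^ 2 + b ^ 2 : ℕ) : ZMod n) ∈ sumTwoSquares n :=
  ⟨a, b, by push_cast; rfl⟩

theorem natCast_sq_add_sq_add_pow_sub_pow_mem_sumTwoSquares (n a b p j : ℕ) :
    ((a ^ 2 + b ^ 2 + p ^ j : ℕ) : ZMod n) - (p : ZMod n) ^ j ∈ sumTwoSquares n :=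
  ⟨a, b, by push_cast; ring⟩

theorem natCast_sq_add_sq_add_pow_mem_sumTwoSquares_of_le (a b p : ℕ) {k j : ℕ} (h : k ≤ j) :
    ((a ^ 2 + b ^ 2 + p ^ j : ℕ) : ZMod (p ^ k)) ∈ sumTwoSquares (p ^ k) := by
  rw [Nat.cast_add, Nat.cast_pow, ZMod.natCast_pow_eq_zero_of_le p h, add_zero]
  exact natCast_sq_add_sq_mem_sumTwoSquares _ a b

theorem not_sq_add_sq_add_two_pow_of_conditions_general (k m : ℕ) (n : ℕ) (hn : n = 2 ^ k * m) (x : ℕ)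
    (h1 : (x : ZMod (2 ^ k)) ∈ notSumTwoSquares (2 ^ k))
    (h2 : ∀ i < k, ((x : ZMod n) - 2 ^ i) ∈ notSumTwoSquares n) :
    ∀ M : ℕ, M ≡ x [MOD n] →
      (¬ ∃ a b : ℕ, M = a ^ 2 + b ^ 2) ∧
      (¬ ∃ a b j : ℕ, M = a ^ 2 + b ^ 2 + 2 ^ j) := by
  intro M hM
  have hMn : (M : ZMod n) = x := (ZMod.natCast_eq_natCast_iff _ _ _).mpr hM
  have hMk : (M : ZMod (2 ^ k)) = x :=
    (ZMod.natCast_eq_natCast_iff _ _ _).mpr (hM.of_dvd (hn ▸ dvd_mul_right _ _))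
  refine ⟨?_, ?_⟩
  · rintro ⟨a, b, rfl⟩
    exact h1 (hMk ▸ natCast_sq_add_sq_mem_sumTwoSquares _ a b)
  · rintro ⟨a, b, j, rfl⟩
    rcases lt_or_ge j k with hj | hj
    · exact h2 j hj (hMn ▸ natCast_sq_add_sq_add_pow_sub_pow_mem_sumTwoSquares n a b 2 j)
    · exact h1 (hMk ▸ natCast_sq_add_sq_add_pow_mem_sumTwoSquares_of_le a b 2 hj)

/-- Let `k ≥ 2`, `m` odd and positive, `n = 2^k ⬝ m`. If `x` is a nonnegative integer with
`x mod 2^k ∈ N_{2^k}` and `(x − 2^i) mod n ∈ N_n` for `i = 0, …, k−1`, then no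
nonnegative integer `M ≡ x (mod n)` can be written as `a² + b²` or as `a² + b² + 2^j`. -/
theorem not_sq_add_sq_add_two_pow_of_conditions (k m : ℕ) (hk : 2 ≤ k) (hm : Odd m)
    (hm0 : 0 < m) (n : ℕ) (hn : n = 2 ^ k * m) (x : ℕ)
    (h1 : (x : ZMod (2 ^ k)) ∈ notSumTwoSquares (2 ^ k))
    (h2 : ∀ i < k, ((x : ZMod n) - 2 ^ i) ∈ notSumTwoSquares n) :
    ∀ M : ℕ, M ≡ x [MOD n] →
      (¬ ∃ a b : ℕ, M = a ^ 2 + b ^ 2) ∧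
      (¬ ∃ a b j : ℕ, M = a ^ 2 + b ^ 2 + 2 ^ j) :=
  not_sq_add_sq_add_two_pow_of_conditions_general k m n hn x h1 h2
end

section
/- No nonnegative integer congruent to 23 modulo 72 can be written as a^2 + b^2 or as a^2 + b^2 + 2^j with a, b nonnegative integers and j ≥ 0. Consequently, the set of positive integers that cannot be written as a sum of two squares plus at most one power of 2 has lower asymptotic density at least 1/72. -/
/-!
Modulo 8 a sum of two squares lies in {0, 1, 2, 4, 5} and `2 ^ j` lies in {1, 2, 4, 0}, so
`a² + b² + 2 ^ j ≡ 7 (mod 8)` forces `j = 1`; but modulo 9 a sum of two squares is never `3`, so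
`a² + b² + 2 ≢ 5 (mod 9)`. Hence no `M ≡ 23 (mod 72)` is represented, and these residues already
have density `1/72`.
-/

open Filter

theorem sq_add_sq_ne_three_zmod_nine : ∀ a b : ZMod 9, a ^ 2 + b ^ 2 ≠ 3 := by decide

theorem sq_add_sq_add_ne_seven_zmod_eight :
    ∀ a b c : ZMod 8, c ∈ ({0, 1, 4} : Finset (ZMod 8)) → a ^ 2 + b ^ 2 + c ≠ 7 := by
  decide

theorem two_pow_mem_zmod_eight {j : ℕ} (hj : j ≠ 1) :
    (2 : ZMod 8) ^ j ∈ ({0, 1, 4} : Finset (ZMod 8)) := by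
  match j, hj with
  | 0, _ => decide
  | 2, _ => decide
  | j + 3, _ => simp [pow_add, show (2 : ZMod 8) ^ 3 = 0 from rfl]

theorem ne_sq_add_sq_of_mod_eight_eq_seven {n : ℕ} (h : n % 8 = 7) (a b : ℕ) :
    n ≠ a ^ 2 + b ^ 2 := by
  rintro rfl
  have h8 := (h ▸ ZMod.natCast_mod (a ^ 2 + b ^ 2) 8).symm
  push_cast at h8
  exact sq_add_sq_add_ne_seven_zmod_eight a b 0 (by decide) (by simpa using h8)

theorem ne_sq_add_sq_add_two_pow_of_mod_eq {n : ℕ} (h : n % 72 = 23) (a b j : ℕ) :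
    n ≠ a ^ 2 + b ^ 2 + 2 ^ j := by
  have h8 : n % 8 = 7 := by omega
  have h9 : n % 9 = 5 := by omega
  rintro rfl
  rcases eq_or_ne j 1 with rfl | hj
  · have h9 := (h9 ▸ ZMod.natCast_mod (a ^ 2 + b ^ 2 + 2 ^ 1) 9).symm
    push_cast at h9
    exact sq_add_sq_ne_three_zmod_nine a b (by linear_combination h9)
  · have h8 := (h8 ▸ ZMod.natCast_mod (a ^ 2 + b ^ 2 + 2 ^ j) 8).symm
    push_cast at h8
    exact sq_add_sq_add_ne_seven_zmod_eight a b _ (two_pow_mem_zmod_eight hj) h8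

section ResidueClassDensity

variable {S : Set ℕ} {m r : ℕ}

theorem le_card_inter_Icc_of_forall_mod_eq (hr : r < m) (hS : ∀ M, M % m = r → M ∈ S) (x : ℕ) :
    (x - r) / m ≤ Nat.card (S ∩ Set.Icc 1 x : Set ℕ) := by
  have hm : 0 < m := (Nat.zero_le r).trans_lt hr
  set n := (x - r) / m
  have hn : m * n ≤ x - r := Nat.mul_div_le (x - r) m
  have hsub : (fun i => m * (i + 1) + r) '' Set.Iio n ⊆ S ∩ Set.Icc 1 x := by
    rintro _ ⟨i, hi, rfl⟩
    dsimp only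
    have hle : m * (i + 1) ≤ x - r := (Nat.mul_le_mul_left m hi).trans hn
    have hpos : 0 < m * (i + 1) := by positivity
    refine ⟨hS _ ?_, Set.mem_Icc.mpr ⟨by omega, by omega⟩⟩
    rw [Nat.mul_add_mod_self_left, Nat.mod_eq_of_lt hr]
  calc n = Nat.card ((fun i => m * (i + 1) + r) '' Set.Iio n) := by
        rw [Nat.card_image_of_injective fun i j h => by simpa [hm.ne'] using h]
        simp
    _ ≤ Nat.card (S ∩ Set.Icc 1 x : Set ℕ) :=
        Nat.card_mono ((Set.finite_Icc 1 x).inter_of_right S) hsub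

theorem one_div_le_liminf_card_inter_Icc_div (hr : r < m) (hS : ∀ M, M % m = r → M ∈ S) :
    (1 / m : ℝ) ≤ liminf (fun x : ℕ => (Nat.card (S ∩ Set.Icc 1 x : Set ℕ) : ℝ) / x) atTop := by
  have hm : 0 < m := (Nat.zero_le r).trans_lt hr
  set g := fun x : ℕ => 1 / (m : ℝ) - (r + m) / m / x
  have hg : Tendsto g atTop (nhds (1 / m)) := by
    simpa only [sub_zero] using
      tendsto_const_nhds.sub (tendsto_const_div_atTop_nhds_zero_nat ((r + m) / m : ℝ))
  have hgf : ∀ᶠ x : ℕ in atTop, g x ≤ (Nat.card (S ∩ Set.Icc 1 x : Set ℕ) : ℝ) / x := by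
    filter_upwards [eventually_gt_atTop 0] with x hx
    have hdiv : (x : ℝ) - r - m ≤ m * ((x - r) / m : ℕ) := by
      have hq := Nat.lt_div_mul_add (a := x - r) hm
      have hx : x < m * ((x - r) / m) + m + r := by rw [Nat.mul_comm]; omega
      have hx' := (Nat.cast_lt (α := ℝ)).mpr hx
      push_cast at hx'
      linarith
    have hcount := (Nat.cast_le (α := ℝ)).mpr (le_card_inter_Icc_of_forall_mod_eq hr hS x)
    calc g x = ((x : ℝ) - r - m) / m / x := by simp only [g]; field_simp; ring
      _ ≤ (Nat.card (S ∩ Set.Icc 1 x : Set ℕ) : ℝ) / x := by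
        gcongr
        rw [div_le_iff₀' (by positivity)]
        linarith [mul_le_mul_of_nonneg_left hcount (Nat.cast_nonneg (α := ℝ) m)]
  have hcobdd : IsCoboundedUnder (· ≥ ·) atTop
      fun x : ℕ => (Nat.card (S ∩ Set.Icc 1 x : Set ℕ) : ℝ) / x := by
    refine isCoboundedUnder_ge_of_le atTop (x := 1) fun x => ?_
    have : Nat.card (S ∩ Set.Icc 1 x : Set ℕ) ≤ x := by
      simpa using Nat.card_mono (Set.finite_Icc 1 x) Set.inter_subset_right
    exact div_le_one_of_le₀ (by exact_mod_cast this) x.cast_nonneg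
  calc (1 / m : ℝ) = liminf g atTop := hg.liminf_eq.symm
    _ ≤ _ := liminf_le_liminf hgf hg.isBoundedUnder_ge hcobdd

end ResidueClassDensity

/-- No nonnegative integer congruent to `23` mod `72` can be written as `a² + b²` or as
`a² + b² + 2^j`, and consequently the set of positive integers not expressible as a sum
of two squares plus at most one power of `2` has lower asymptotic density at least `1/72`. -/
theorem density_not_sq_add_sq_add_two_pow :
    (∀ M : ℕ, M % 72 = 23 →
      (¬ ∃ a b : ℕ, M = a ^ 2 + b ^ 2) ∧ (¬ ∃ a b j : ℕ, M = a ^ 2 + b ^ 2 + 2 ^ j)) ∧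
    (1 / 72 : ℝ) ≤ liminf (fun x : ℕ =>
      (Nat.card (({M : ℕ | 0 < M ∧ (¬ ∃ a b : ℕ, M = a ^ 2 + b ^ 2) ∧
        (¬ ∃ a b j : ℕ, M = a ^ 2 + b ^ 2 + 2 ^ j)} ∩ Set.Icc 1 x : Set ℕ)) : ℝ) / x)
      atTop := by
  have hobstruction : ∀ M : ℕ, M % 72 = 23 →
      (¬ ∃ a b : ℕ, M = a ^ 2 + b ^ 2) ∧ (¬ ∃ a b j : ℕ, M = a ^ 2 + b ^ 2 + 2 ^ j) := by
    intro M hM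
    constructor
    · rintro ⟨a, b, hab⟩
      exact ne_sq_add_sq_of_mod_eight_eq_seven (by omega) a b hab
    · rintro ⟨a, b, j, habj⟩
      exact ne_sq_add_sq_add_two_pow_of_mod_eq hM a b j habj
  refine ⟨hobstruction, ?_⟩
  convert one_div_le_liminf_card_inter_Icc_div (m := 72) (r := 23) (by norm_num) ?_ using 1
  · norm_num
  · exact fun M hM => ⟨by omega, hobstruction M hM⟩
end
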